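/- Let (K, v) be a rank one valued field and let E = {s_n} be a pseudo-convergent sequence of algebraic type with breadth δ ∈ ℝ such that V_E has rank 2 (equivalently δ is torsion over Γ_v). Then the map ν: K(X)* → ℝ² (lexicographically ordered) given by ν(φ) = (w_E(φ), −deg_dom_E(φ)) is a valuation on K(X), where w_E(φ) = lim v(φ(s_n)) and deg_dom_E(φ) is the dominating degree of φ with respect to E; its valuation ring equals V_E. -/

import Mathlib

/-!
Extend `v` to the algebraic closure of `K`. For each root `α` of a polynomial `f`, the values
`v (sₙ - α)` are eventually constant unless `α` is a pseudo-limit of `E`, in which case they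
equal `δₙ`; hence `v (f (sₙ)) = λ δₙ + γ` for large `n`, `λ` counting the roots that are
pseudo-limits. Because `δₙ` increases strictly to `δ`, the eventual order of the sequences
`λ δₙ + γ` is the lexicographic order of the pairs `(λ δ + γ, -λ)`. So `f ↦ (λ δ + γ, -λ)` is a
valuation on `K[X]`; its extension to `K(X)` is nonnegative exactly when `v (φ (sₙ)) ≥ 0`
eventually.
-/

open Filter

/-- Membership in V_E: φ(s_n) is defined and lies in V for all but finitely many n. -/
def memVE {K : Type*} [Field K]
    (v : AddValuation K (WithTop ℝ)) (s : ℕ → K) (φ : RatFunc K) : Prop :=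
  ∀ᶠ n in atTop, (RatFunc.denom φ).eval (s n) ≠ 0 ∧
    0 ≤ v (RatFunc.eval (RingHom.id K) (s n) φ)

open Polynomial Topology

section AffineGerm

variable {δn : ℕ → ℝ} {δ : ℝ}

theorem affine_eq_of_eventually_eq (hinj : Function.Injective δn) {a b a' b' : ℝ}
    (h : ∀ᶠ n in atTop, a * δn n + b = a' * δn n + b') : a = a' ∧ b = b' := by
  obtain ⟨N, hN⟩ := eventually_atTop.1 h
  have hN₀ := hN N le_rfl
  have hN₁ := hN (N + 1) N.le_succ
  have hslope : (a - a') * (δn N - δn (N + 1)) = 0 := by linarith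
  have ha : a = a' := sub_eq_zero.1 <| (mul_eq_zero.1 hslope).resolve_right <|
    sub_ne_zero.2 (hinj.ne N.succ_ne_self.symm)
  exact ⟨ha, by subst ha; linarith⟩

theorem StrictMono.lt_of_tendsto (hmono : StrictMono δn) (hlim : Tendsto δn atTop (𝓝 δ))
    (n : ℕ) : δn n < δ :=
  (hmono n.lt_succ_self).trans_le (hmono.monotone.ge_of_tendsto hlim _)

-- `a δₙ + b` tends to `a δ + b`, and when that limit is `0` its sign is that of `-a`, as `δₙ < δ`.
theorem eventually_nonneg_affine_iff (hmono : StrictMono δn) (hlim : Tendsto δn atTop (𝓝 δ))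
    {a b : ℝ} : (∀ᶠ n in atTop, 0 ≤ a * δn n + b) ↔ 0 ≤ toLex (a * δ + b, -a) := by
  have hδ := hmono.lt_of_tendsto hlim
  have hconv : Tendsto (fun n => a * δn n + b) atTop (𝓝 (a * δ + b)) :=
    (hlim.const_mul a).add_const b
  rw [show (0 : ℝ ×ₗ ℝ) = toLex (0, 0) from rfl, Prod.Lex.toLex_le_toLex]
  constructor
  · intro h
    rcases (ge_of_tendsto hconv h).lt_or_eq with hpos | hzero
    · exact Or.inl hpos
    · obtain ⟨n, hn⟩ := h.exists
      exact Or.inr ⟨hzero, by nlinarith [hδ n]⟩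
  · rintro (hpos | ⟨hzero, hneg⟩)
    · exact (hconv.eventually (lt_mem_nhds hpos)).mono fun n => le_of_lt
    · exact Eventually.of_forall fun n => by nlinarith [hδ n]

theorem eventually_affine_le_iff (hmono : StrictMono δn) (hlim : Tendsto δn atTop (𝓝 δ))
    {a b a' b' : ℝ} : (∀ᶠ n in atTop, a * δn n + b ≤ a' * δn n + b') ↔
      toLex (a * δ + b, -a) ≤ toLex (a' * δ + b', -a') := by
  calc (∀ᶠ n in atTop, a * δn n + b ≤ a' * δn n + b')
      ↔ ∀ᶠ n in atTop, 0 ≤ (a' - a) * δn n + (b' - b) :=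
        eventually_congr <| Eventually.of_forall fun n => by constructor <;> intro <;> linarith
    _ ↔ 0 ≤ toLex ((a' - a) * δ + (b' - b), -(a' - a)) :=
        eventually_nonneg_affine_iff hmono hlim
    _ ↔ _ := by
        rw [← sub_nonneg (a := toLex (a' * δ + b', -a')), ← toLex_sub, Prod.mk_sub_mk]
        congr! 3 <;> ring

theorem min_toLex_le_of_eventually (hmono : StrictMono δn) (hlim : Tendsto δn atTop (𝓝 δ))
    {a₁ b₁ a₂ b₂ a₃ b₃ : ℝ}
    (h : ∀ᶠ n in atTop, min (a₁ * δn n + b₁) (a₂ * δn n + b₂) ≤ a₃ * δn n + b₃) :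
    min (toLex (a₁ * δ + b₁, -a₁)) (toLex (a₂ * δ + b₂, -a₂)) ≤ toLex (a₃ * δ + b₃, -a₃) := by
  rcases le_total (toLex (a₁ * δ + b₁, -a₁)) (toLex (a₂ * δ + b₂, -a₂)) with h₁₂ | h₂₁
  · rw [min_eq_left h₁₂]
    refine (eventually_affine_le_iff hmono hlim).1 ?_
    filter_upwards [h, (eventually_affine_le_iff hmono hlim).2 h₁₂] with n hn h₁₂n
    rwa [min_eq_left h₁₂n] at hn
  · rw [min_eq_right h₂₁]
    refine (eventually_affine_le_iff hmono hlim).1 ?_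
    filter_upwards [h, (eventually_affine_le_iff hmono hlim).2 h₂₁] with n hn h₂₁n
    rwa [min_eq_right h₂₁n] at hn

-- For `u n = v (φ (sₙ))` this is `(w_E(φ), -deg_dom(φ))`; it is `⊤` when `u` is not eventually
-- of the form `a δₙ + b`.
open Classical in
noncomputable def lexGerm (δn : ℕ → ℝ) (δ : ℝ) (u : ℕ → WithTop ℝ) : WithTop (ℝ ×ₗ ℝ) :=
  if h : ∃ p : ℝ × ℝ, ∀ᶠ n in atTop, u n = ↑(p.1 * δn n + p.2) then
    ↑(toLex (h.choose.1 * δ + h.choose.2, -h.choose.1))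
  else ⊤

theorem lexGerm_eq (hinj : Function.Injective δn) {u : ℕ → WithTop ℝ} {a b : ℝ}
    (h : ∀ᶠ n in atTop, u n = ↑(a * δn n + b)) : lexGerm δn δ u = ↑(toLex (a * δ + b, -a)) := by
  have hex : ∃ p : ℝ × ℝ, ∀ᶠ n in atTop, u n = ↑(p.1 * δn n + p.2) := ⟨(a, b), h⟩
  rw [lexGerm, dif_pos hex]
  obtain ⟨rfl, rfl⟩ := affine_eq_of_eventually_eq hinj <|
    (hex.choose_spec.and h).mono fun n ⟨h₁, h₂⟩ => WithTop.coe_inj.1 (h₁.symm.trans h₂)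
  rfl

theorem lexGerm_eq_top {u : ℕ → WithTop ℝ} (h : ∀ᶠ n in atTop, u n = ⊤) : lexGerm δn δ u = ⊤ :=
  dif_neg fun ⟨_, hp⟩ => by
    obtain ⟨n, htop, hcoe⟩ := (h.and hp).exists
    exact WithTop.top_ne_coe (htop.symm.trans hcoe)

end AffineGerm

section LexLimit

variable {R : Type*} [Ring R] (w : ℕ → AddValuation R (WithTop ℝ)) {δn : ℕ → ℝ} {δ : ℝ}

theorem lexGerm_map_zero : lexGerm δn δ (fun n => w n 0) = ⊤ :=
  lexGerm_eq_top (Eventually.of_forall fun n => (w n).map_zero)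

variable {w} in
theorem lexGerm_map_mul (haff : ∀ x ≠ 0, ∃ a b : ℝ, ∀ᶠ n in atTop, w n x = ↑(a * δn n + b))
    (hinj : Function.Injective δn) (x y : R) :
    lexGerm δn δ (fun n => w n (x * y)) =
      lexGerm δn δ (fun n => w n x) + lexGerm δn δ (fun n => w n y) := by
  rcases eq_or_ne x 0 with rfl | hx
  · simp only [zero_mul, lexGerm_map_zero, top_add]
  rcases eq_or_ne y 0 with rfl | hy
  · simp only [mul_zero, lexGerm_map_zero, add_top]
  obtain ⟨a₁, b₁, h₁⟩ := haff x hx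
  obtain ⟨a₂, b₂, h₂⟩ := haff y hy
  have hxy : ∀ᶠ n in atTop, w n (x * y) = ↑((a₁ + a₂) * δn n + (b₁ + b₂)) := by
    filter_upwards [h₁, h₂] with n e₁ e₂
    rw [(w n).map_mul, e₁, e₂, ← WithTop.coe_add]
    ring_nf
  rw [lexGerm_eq hinj hxy, lexGerm_eq hinj h₁, lexGerm_eq hinj h₂, ← WithTop.coe_add,
    ← toLex_add, Prod.mk_add_mk]
  congr 3 <;> ring

variable {w} in
theorem lexGerm_map_add (haff : ∀ x ≠ 0, ∃ a b : ℝ, ∀ᶠ n in atTop, w n x = ↑(a * δn n + b))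
    (hmono : StrictMono δn) (hlim : Tendsto δn atTop (𝓝 δ)) (x y : R) :
    min (lexGerm δn δ (fun n => w n x)) (lexGerm δn δ (fun n => w n y)) ≤
      lexGerm δn δ (fun n => w n (x + y)) := by
  rcases eq_or_ne x 0 with rfl | hx
  · simp only [zero_add, lexGerm_map_zero, min_eq_right le_top, le_refl]
  rcases eq_or_ne y 0 with rfl | hy
  · simp only [add_zero, lexGerm_map_zero, min_eq_left le_top, le_refl]
  rcases eq_or_ne (x + y) 0 with hxy | hxy
  · simp only [hxy, lexGerm_map_zero, le_top]
  obtain ⟨a₁, b₁, h₁⟩ := haff x hx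
  obtain ⟨a₂, b₂, h₂⟩ := haff y hy
  obtain ⟨a₃, b₃, h₃⟩ := haff (x + y) hxy
  rw [lexGerm_eq hmono.injective h₁, lexGerm_eq hmono.injective h₂,
    lexGerm_eq hmono.injective h₃, ← WithTop.coe_min, WithTop.coe_le_coe]
  refine min_toLex_le_of_eventually hmono hlim ?_
  filter_upwards [h₁, h₂, h₃] with n e₁ e₂ e₃
  have hult := (w n).map_add x y
  rwa [e₁, e₂, e₃, ← WithTop.coe_min, WithTop.coe_le_coe] at hult

variable (haff : ∀ x ≠ 0, ∃ a b : ℝ, ∀ᶠ n in atTop, w n x = ↑(a * δn n + b))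

noncomputable def AddValuation.lexLimit (hmono : StrictMono δn) (hlim : Tendsto δn atTop (𝓝 δ)) :
    AddValuation R (WithTop (ℝ ×ₗ ℝ)) :=
  AddValuation.of (fun x => lexGerm δn δ fun n => w n x) (lexGerm_map_zero w)
    ((lexGerm_eq (a := 0) (b := 0) hmono.injective
      (Eventually.of_forall fun n => by simp)).trans (by simp))
    (lexGerm_map_add haff hmono hlim) (lexGerm_map_mul haff hmono.injective)

theorem AddValuation.lexLimit_eq (hmono : StrictMono δn) (hlim : Tendsto δn atTop (𝓝 δ))
    {x : R} {a b : ℝ} (h : ∀ᶠ n in atTop, w n x = ↑(a * δn n + b)) :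
    AddValuation.lexLimit w haff hmono hlim x = ↑(toLex (a * δ + b, -a)) :=
  lexGerm_eq hmono.injective h

end LexLimit

section PseudoConvergent

variable {L Γ₀ : Type*} [LinearOrderedCommGroupWithZero Γ₀] {t : ℕ → L} {g : ℕ → Γ₀}

-- Either `α` is eventually farther from `t n` than the gaps `g n` (then `w (t n - α)` is
-- eventually constant), or `α` is a pseudo-limit of `t` and `w (t n - α) = g n` throughout.
theorem Valuation.exists_eventually_map_sub_eq [Ring L] (w : Valuation L Γ₀)
    (hpc : ∀ n m, n < m → w (t m - t n) = g n) (hg : StrictAnti g) (α : L) :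
    ∃ (k : ℕ) (c : Γ₀), c ≠ 0 ∧ ∀ᶠ n in atTop, w (t n - α) = c * g n ^ k := by
  by_cases hfar : ∃ N, g N < w (t N - α)
  · obtain ⟨N, hN⟩ := hfar
    refine ⟨0, w (t N - α), (zero_le.trans_lt hN).ne', eventually_atTop.2 ⟨N, fun n hn => ?_⟩⟩
    rw [pow_zero, mul_one]
    rcases hn.eq_or_lt with rfl | hlt
    · rfl
    rw [← sub_add_sub_cancel (t n) (t N) α, w.map_add_eq_of_lt_right]
    rwa [hpc N n hlt]
  · push Not at hfar
    refine ⟨1, 1, one_ne_zero, Eventually.of_forall fun n => ?_⟩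
    rw [pow_one, one_mul]
    refine (hfar n).antisymm (not_lt.1 fun hlt => (hfar (n + 1)).not_gt ?_)
    rw [← sub_add_sub_cancel (t (n + 1)) (t n) α,
      w.map_add_eq_of_lt_left (by rwa [hpc n _ n.lt_succ_self]), hpc n _ n.lt_succ_self]
    exact hg n.lt_succ_self

theorem Valuation.exists_eventually_map_prod_sub_eq [CommRing L] (w : Valuation L Γ₀)
    (hpc : ∀ n m, n < m → w (t m - t n) = g n) (hg : StrictAnti g) (M : Multiset L) :
    ∃ (k : ℕ) (c : Γ₀), c ≠ 0 ∧ ∀ᶠ n in atTop, w (M.map (t n - ·)).prod = c * g n ^ k := by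
  induction M using Multiset.induction with
  | empty => exact ⟨0, 1, one_ne_zero, Eventually.of_forall fun n => by simp⟩
  | cons α M ih =>
    obtain ⟨k₁, c₁, hc₁, h₁⟩ := w.exists_eventually_map_sub_eq hpc hg α
    obtain ⟨k₂, c₂, hc₂, h₂⟩ := ih
    refine ⟨k₁ + k₂, c₁ * c₂, mul_ne_zero hc₁ hc₂, ?_⟩
    filter_upwards [h₁, h₂] with n e₁ e₂
    rw [Multiset.map_cons, Multiset.prod_cons, map_mul, e₁, e₂, pow_add, mul_mul_mul_comm]

theorem Valuation.exists_eventually_map_eval_eq [Field L] (w : Valuation L Γ₀)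
    (hpc : ∀ n m, n < m → w (t m - t n) = g n) (hg : StrictAnti g) {f : L[X]} (hf : f ≠ 0)
    (hsplit : f.Splits) :
    ∃ (k : ℕ) (c : Γ₀), c ≠ 0 ∧ ∀ᶠ n in atTop, w (f.eval (t n)) = c * g n ^ k := by
  obtain ⟨k, c, hc, h⟩ := w.exists_eventually_map_prod_sub_eq hpc hg f.roots
  refine ⟨k, w f.leadingCoeff * c, mul_ne_zero ?_ hc, ?_⟩
  · exact (w.ne_zero_iff).2 (Polynomial.leadingCoeff_ne_zero.2 hf)
  filter_upwards [h] with n hn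
  rw [hsplit.eval_eq_prod_roots, map_mul, hn, mul_assoc]

end PseudoConvergent

theorem ValuationSubring.exists_comap_eq {K L : Type*} [Field K] [Field L] [Algebra K L]
    (V : ValuationSubring K) : ∃ W : ValuationSubring L, W.comap (algebraMap K L) = V := by
  obtain ⟨W, hVW, hloc⟩ :=
    IsLocalRing.exists_factor_valuationRing ((algebraMap K L).comp V.subtype)
  refine ⟨W, le_antisymm (fun x (hx : algebraMap K L x ∈ W) => ?_) fun x hx => hVW ⟨x, hx⟩⟩
  by_contra hxV
  have hx0 : x ≠ 0 := by rintro rfl; exact hxV V.zero_mem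
  -- `x⁻¹` is a nonunit of `V` whose image in `W` is invertible, with inverse `x`.
  set y : V := ⟨x⁻¹, (V.mem_or_inv_mem x).resolve_left hxV⟩
  have hy : IsUnit (((algebraMap K L).comp V.subtype).codRestrict W.toSubring hVW y) :=
    isUnit_iff_exists_inv.2 ⟨⟨algebraMap K L x, hx⟩, Subtype.ext <| by simp [y, hx0]⟩
  obtain ⟨z, hz⟩ := (hloc.map_nonunit y hy).exists_right_inv
  have hzx : (z : K) = x := by
    have := congrArg Subtype.val hz
    simp only [y, MulMemClass.coe_mul, OneMemClass.coe_one] at this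
    exact ((inv_mul_eq_one₀ hx0).1 this).symm
  exact hxV (hzx ▸ z.2)

theorem Valuation.exists_isEquiv_comap_valuation {K : Type*} [Field K] {Γ₀ : Type*}
    [LinearOrderedCommGroupWithZero Γ₀] (v : Valuation K Γ₀) (L : Type*) [Field L]
    [Algebra K L] :
    ∃ W : ValuationSubring L, (W.valuation.comap (algebraMap K L)).IsEquiv v := by
  obtain ⟨W, hW⟩ := v.valuationSubring.exists_comap_eq (L := L)
  refine ⟨W, (Valuation.isEquiv_iff_valuationSubring _ _).2 ?_⟩
  ext x
  rw [← hW]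
  simp [ValuationSubring.valuation_le_one_iff]

theorem WithTop.eq_coe_sub_of_add_coe_eq {G : Type*} [AddGroup G] {x : WithTop G} {a b : G}
    (h : x + a = b) : x = ↑(b - a) := by
  obtain ⟨x', a', rfl, ha, rfl⟩ := WithTop.add_eq_coe.1 h
  rw [WithTop.coe_inj.1 ha, add_sub_cancel_right]

section Gauge

variable {K : Type*} [Field K] (v : AddValuation K (WithTop ℝ)) {s : ℕ → K} {δn : ℕ → ℝ}

theorem AddValuation.map_sub_eq_of_gauge (hgauge : ∀ n, v (s (n + 1) - s n) = δn n)
    (hmono : StrictMono δn) {n m : ℕ} (h : n < m) : v (s m - s n) = δn n := by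
  induction m, h using Nat.le_induction with
  | base => exact hgauge n
  | succ m hnm ih =>
    have hlt : δn n < δn m := hmono hnm
    rw [← sub_add_sub_cancel (s (m + 1)) (s m) (s n), v.map_add_of_distinct_val, hgauge, ih,
      ← WithTop.coe_min, min_eq_right hlt.le]
    rw [hgauge, ih]
    exact fun heq => hlt.ne' (WithTop.coe_inj.1 heq)

-- The extension of `v` to the algebraic closure is not real-valued, so the affine behaviour
-- of `v (f (sₙ))` is first obtained in this cross-multiplied form, which transfers back to `v`.
theorem AddValuation.exists_eventually_map_eval_add_eq (hgauge : ∀ n, v (s (n + 1) - s n) = δn n)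
    (hmono : StrictMono δn) {f : K[X]} (hf : f ≠ 0) :
    ∃ (k N : ℕ), f.eval (s N) ≠ 0 ∧ ∀ n ≥ N,
      v (f.eval (s n)) + k • v (s (N + 1) - s N) = v (f.eval (s N)) + k • v (s (n + 1) - s n) := by
  obtain ⟨W, hW⟩ := v.toValuation.exists_isEquiv_comap_valuation (AlgebraicClosure K)
  set ι := algebraMap K (AlgebraicClosure K)
  have heq : ∀ x y, W.valuation (ι x) = W.valuation (ι y) ↔ v x = v y := fun x y =>
    hW.eq_iff.trans (by simp [AddValuation.toValuation_apply])
  have hlt : ∀ x y, W.valuation (ι x) < W.valuation (ι y) ↔ v y < v x := fun x y =>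
    hW.lt_iff_lt.trans (by simp [AddValuation.toValuation_apply])
  set g : ℕ → W.ValueGroup := fun n => W.valuation (ι (s (n + 1) - s n))
  have hpc : ∀ n m, n < m → W.valuation (ι (s m) - ι (s n)) = g n := fun n m h => by
    rw [← _root_.map_sub, heq, v.map_sub_eq_of_gauge hgauge hmono h, hgauge]
  have hg : StrictAnti g := fun n m h => (hlt _ _).2 <| by
    rw [hgauge, hgauge]
    exact WithTop.coe_lt_coe.2 (hmono h)
  obtain ⟨k, c, hc, h⟩ := W.valuation.exists_eventually_map_eval_eq hpc hg
    ((Polynomial.map_ne_zero_iff ι.injective).2 hf) (IsAlgClosed.splits _)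
  simp only [eval_map, eval₂_at_apply] at h
  obtain ⟨N, hN⟩ := eventually_atTop.1 h
  have hg0 : ∀ n, g n ≠ 0 := fun n => (zero_le.trans_lt (hg n.lt_succ_self)).ne'
  refine ⟨k, N, fun h0 => mul_ne_zero hc (pow_ne_zero k (hg0 N)) ?_, fun n hn => ?_⟩
  · rw [← hN N le_rfl, h0, _root_.map_zero, Valuation.map_zero]
  · have hval : W.valuation (ι (f.eval (s n) * (s (N + 1) - s N) ^ k)) =
        W.valuation (ι (f.eval (s N) * (s (n + 1) - s n) ^ k)) := by
      simp only [_root_.map_mul, _root_.map_pow, hN n hn, hN N le_rfl]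
      exact mul_right_comm c (g n ^ k) (g N ^ k)
    simpa only [map_mul, map_pow] using (heq _ _).1 hval

theorem AddValuation.exists_eventually_map_eval_eq (hgauge : ∀ n, v (s (n + 1) - s n) = δn n)
    (hmono : StrictMono δn) {f : K[X]} (hf : f ≠ 0) :
    ∃ (k : ℕ) (γ : ℝ), ∀ᶠ n in atTop, v (f.eval (s n)) = ↑(k * δn n + γ) := by
  obtain ⟨k, N, hN0, hN⟩ := v.exists_eventually_map_eval_add_eq hgauge hmono hf
  obtain ⟨r, hr⟩ := WithTop.ne_top_iff_exists.1 ((v.ne_top_iff).2 hN0)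
  refine ⟨k, r - k * δn N, eventually_atTop.2 ⟨N, fun n hn => ?_⟩⟩
  have hsum := hN n hn
  rw [hgauge, hgauge, ← hr, ← WithTop.coe_nsmul, ← WithTop.coe_nsmul, ← WithTop.coe_add] at hsum
  rw [WithTop.eq_coe_sub_of_add_coe_eq hsum, nsmul_eq_mul, nsmul_eq_mul]
  congr 1
  ring

end Gauge

theorem AddValuation.exists_apply_algebraMap_eq {A F Γ : Type*} [CommRing A] [IsDomain A]
    [CommRing F] [Algebra A F] [IsFractionRing A F] [LinearOrderedAddCommGroupWithTop Γ]
    (P : AddValuation A Γ) (hP : ∀ a, P a = ⊤ → a = 0) :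
    ∃ ν : AddValuation F Γ, ∀ a, ν (algebraMap A F a) = P a := by
  have hS : nonZeroDivisors A ≤ P.toValuation.supp.primeCompl := fun a ha hsupp =>
    nonZeroDivisors.ne_zero ha (hP a ((P.toValuation.mem_supp_iff a).1 hsupp))
  exact ⟨AddValuation.ofValuation (P.toValuation.extendToLocalization hS F), fun a =>
    congrArg (OrderDual.ofDual ∘ Multiplicative.toAdd)
      (P.toValuation.extendToLocalization_apply_map_apply hS F a)⟩

section RatFunc

variable {K : Type*} [Field K] (v : AddValuation K (WithTop ℝ)) {s : ℕ → K} {δn : ℕ → ℝ}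
  {δ : ℝ}

theorem AddValuation.exists_ratFunc_eventually_map_eval_eq
    (hgauge : ∀ n, v (s (n + 1) - s n) = δn n) (hmono : StrictMono δn)
    (hlim : Tendsto δn atTop (𝓝 δ)) :
    ∃ ν : AddValuation (RatFunc K) (WithTop (ℝ ×ₗ ℝ)), ∀ φ ≠ 0, ∃ a b : ℝ,
      (∀ᶠ n in atTop, φ.denom.eval (s n) ≠ 0 ∧
        v (RatFunc.eval (RingHom.id K) (s n) φ) = ↑(a * δn n + b)) ∧
      ν φ = ↑(toLex (a * δ + b, -a)) := by
  have haff : ∀ f : K[X], f ≠ 0 → ∃ a b : ℝ,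
      ∀ᶠ n in atTop, v.comap (evalRingHom (s n)) f = ↑(a * δn n + b) := fun f hf =>
    let ⟨k, γ, h⟩ := v.exists_eventually_map_eval_eq hgauge hmono hf
    ⟨k, γ, h⟩
  set P := AddValuation.lexLimit _ haff hmono hlim
  obtain ⟨ν, hν⟩ := P.exists_apply_algebraMap_eq (F := RatFunc K) fun f hf => by
    by_contra hf0
    obtain ⟨a, b, h⟩ := haff f hf0
    exact WithTop.coe_ne_top ((AddValuation.lexLimit_eq _ haff hmono hlim h).symm.trans hf)
  refine ⟨ν, fun φ hφ => ?_⟩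
  obtain ⟨a₁, b₁, h₁⟩ := haff φ.num (RatFunc.num_ne_zero hφ)
  obtain ⟨a₂, b₂, h₂⟩ := haff φ.denom φ.denom_ne_zero
  refine ⟨a₁ - a₂, b₁ - b₂, ?_, ?_⟩
  · filter_upwards [h₁, h₂] with n (e₁ : v (φ.num.eval (s n)) = _)
      (e₂ : v (φ.denom.eval (s n)) = _)
    have hden : φ.denom.eval (s n) ≠ 0 := fun h0 => by
      rw [h0, map_zero] at e₂
      exact WithTop.top_ne_coe e₂
    have hnum : φ.num.eval (s n) = RatFunc.eval (RingHom.id K) (s n) φ * φ.denom.eval (s n) :=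
      (div_mul_cancel₀ _ hden).symm
    refine ⟨hden, ?_⟩
    rw [hnum, map_mul, e₂] at e₁
    rw [WithTop.eq_coe_sub_of_add_coe_eq e₁]
    congr 1
    ring
  · have hmul : algebraMap K[X] (RatFunc K) φ.num = φ * algebraMap K[X] (RatFunc K) φ.denom :=
      (div_eq_iff (RatFunc.algebraMap_ne_zero φ.denom_ne_zero)).1 φ.num_div_denom
    have := congrArg ν hmul
    rw [map_mul, hν, hν, AddValuation.lexLimit_eq _ haff hmono hlim h₁,
      AddValuation.lexLimit_eq _ haff hmono hlim h₂] at this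
    rw [WithTop.eq_coe_sub_of_add_coe_eq this.symm, ← toLex_sub, Prod.mk_sub_mk]
    congr 3 <;> ring

end RatFunc

theorem stmt15_general {K : Type*} [Field K] (v : AddValuation K (WithTop ℝ)) (s : ℕ → K)
    (δn : ℕ → ℝ) (δ : ℝ)
    (hgauge : ∀ n, v (s (n + 1) - s n) = (δn n : WithTop ℝ))
    (hmono : StrictMono δn) (hlim : Tendsto δn atTop (nhds δ)) :
    ∃ ν : AddValuation (RatFunc K) (WithTop (ℝ ×ₗ ℝ)),
      (∀ φ : RatFunc K, φ ≠ 0 → ∀ lam : ℤ, ∀ γ : ℝ,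
        (∀ᶠ n in atTop, v (RatFunc.eval (RingHom.id K) (s n) φ) =
          (((lam : ℝ) * δn n + γ : ℝ) : WithTop ℝ)) →
        ν φ = (↑(toLex ((lam : ℝ) * δ + γ, (-lam : ℝ))) : WithTop (ℝ ×ₗ ℝ))) ∧
      (∀ φ : RatFunc K, 0 ≤ ν φ ↔ memVE v s φ) := by
  obtain ⟨ν, hν⟩ := v.exists_ratFunc_eventually_map_eval_eq hgauge hmono hlim
  refine ⟨ν, fun φ hφ lam γ hlam => ?_, fun φ => ?_⟩
  · obtain ⟨a, b, hab, hνφ⟩ := hν φ hφ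
    obtain ⟨rfl, rfl⟩ := affine_eq_of_eventually_eq hmono.injective <|
      (hab.and hlam).mono fun n ⟨⟨_, e₁⟩, e₂⟩ => WithTop.coe_inj.1 (e₁.symm.trans e₂)
    exact hνφ
  rcases eq_or_ne φ 0 with rfl | hφ
  · simp [memVE]
  obtain ⟨a, b, hab, hνφ⟩ := hν φ hφ
  rw [hνφ, WithTop.coe_nonneg, ← eventually_nonneg_affine_iff hmono hlim, memVE]
  refine eventually_congr (hab.mono fun n ⟨hden, hval⟩ => ?_)
  rw [hval, WithTop.coe_nonneg]
  exact ⟨fun h => ⟨hden, h⟩, And.right⟩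

/-- If E is of algebraic type with finite breadth δ torsion over Γ_v (so V_E has
rank 2), then ν(φ) = (w_E(φ), -deg_dom(φ)) ∈ ℝ² (lexicographic) defines a
valuation on K(X) whose valuation ring is V_E. The dominating degree of φ is
characterized as the integer λ with v(φ(s_n)) = λδ_n + γ eventually, in which
case w_E(φ) = λδ + γ. -/
theorem stmt15 {K : Type*} [Field K] (v : AddValuation K (WithTop ℝ)) (s : ℕ → K)
    (δn : ℕ → ℝ) (δ : ℝ)
    (hgauge : ∀ n, v (s (n + 1) - s n) = (δn n : WithTop ℝ))
    (hmono : StrictMono δn) (hlim : Tendsto δn atTop (nhds δ))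
    (halg : ∃ f : Polynomial K, ∃ N, ∀ n ≥ N, v (f.eval (s n)) < v (f.eval (s (n + 1))))
    (hbr : ∃ b : K, b ≠ 0 ∧ ∀ n, (δn n : WithTop ℝ) < v b)
    (htors : ∃ k : ℕ, 1 ≤ k ∧ ∃ x : K, x ≠ 0 ∧ v x = ((k * δ : ℝ) : WithTop ℝ)) :
    ∃ ν : AddValuation (RatFunc K) (WithTop (ℝ ×ₗ ℝ)),
      (∀ φ : RatFunc K, φ ≠ 0 → ∀ lam : ℤ, ∀ γ : ℝ,
        (∀ᶠ n in atTop, v (RatFunc.eval (RingHom.id K) (s n) φ) =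
          (((lam : ℝ) * δn n + γ : ℝ) : WithTop ℝ)) →
        ν φ = (↑(toLex ((lam : ℝ) * δ + γ, (-lam : ℝ))) : WithTop (ℝ ×ₗ ℝ))) ∧
      (∀ φ : RatFunc K, 0 ≤ ν φ ↔ memVE v s φ) :=
  stmt15_general v s δn δ hgauge hmono hlim
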